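/- Let (X, μ) be a measure space with μ(X) < ∞, let α > 0, and let ω : X × X → ℝ be bounded, measurable, and symmetric (ω(x,y) = ω(y,x)). Define J : L²(X,ℝ) → ℝ by J(F) = ∫_X ∫_X ω(x,y) Σ_α(F(x) − F(y)) dμ(x) dμ(y). Then for all F, G ∈ L²(X,ℝ), the Gateaux derivative of J at F in direction G exists and equals d/dt J(F + tG)|_{t=0} = 2 ∫_X ∫_X ω(x,y) σ_α(F(x) − F(y)) G(x) dμ(y) dμ(x). -/

import Mathlib

open MeasureTheory

/-- The piecewise affine sigmoid `σ_α(ρ) = min{1, max{αρ, -1}}`. -/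
noncomputable def sigmoid (α : ℝ) (ρ : ℝ) : ℝ :=
  min 1 (max (α * ρ) (-1))

/-- The antiderivative `Σ_α(ρ) = ∫₀^ρ σ_α(s) ds` of the sigmoid vanishing at `0`. -/
noncomputable def sigmoidPrimitive (α : ℝ) (ρ : ℝ) : ℝ :=
  ∫ s in (0:ℝ)..ρ, sigmoid α s

/-!
Differentiate under the integral sign on `X × X`: `Σ_α` is `1`-Lipschitz with derivative `σ_α`,
so the difference quotients in `t` are dominated by `C (|G x| + |G y|)`, which is integrable since
`μ` is finite. The derivative `∫∫ ω(x,y) σ_α(F x - F y) (G x - G y)` then splits in two, and the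
`G y` half equals minus the `G x` half after swapping `x` and `y`, because
`ω(x,y) σ_α(F x - F y)` is antisymmetric (`ω` symmetric, `σ_α` odd).
-/

lemma abs_sigmoid_le_one (α ρ : ℝ) : |sigmoid α ρ| ≤ 1 :=
  abs_le.2 ⟨le_min (by norm_num) (le_max_right _ _), min_le_left _ _⟩

lemma sigmoid_neg (α ρ : ℝ) : sigmoid α (-ρ) = -sigmoid α ρ := by
  simp only [sigmoid, mul_neg, min_def, max_def]
  split_ifs <;> linarith

lemma sigmoid_continuous (α : ℝ) : Continuous (sigmoid α) := by
  unfold sigmoid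
  fun_prop

lemma hasDerivAt_sigmoidPrimitive (α ρ : ℝ) :
    HasDerivAt (sigmoidPrimitive α) (sigmoid α ρ) ρ :=
  ((sigmoid_continuous α).integral_hasStrictDerivAt 0 ρ).hasDerivAt

lemma sigmoidPrimitive_zero (α : ℝ) : sigmoidPrimitive α 0 = 0 :=
  intervalIntegral.integral_same

lemma lipschitzWith_sigmoidPrimitive (α : ℝ) : LipschitzWith 1 (sigmoidPrimitive α) :=
  lipschitzWith_of_nnnorm_deriv_le (fun ρ => (hasDerivAt_sigmoidPrimitive α ρ).differentiableAt)
    fun ρ => by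
      rw [(hasDerivAt_sigmoidPrimitive α ρ).deriv, ← NNReal.coe_le_coe, coe_nnnorm]
      exact abs_sigmoid_le_one α ρ

section

variable {Y : Type*} [MeasurableSpace Y] {ν : Measure Y}

lemma MeasureTheory.Integrable.bdd_mul_comp_lipschitzWith {z : Y → ℝ} (hz : Integrable z ν)
    {Φ : ℝ → ℝ} {K : NNReal} (hΦ : LipschitzWith K Φ) (hΦ0 : Φ 0 = 0) {w : Y → ℝ} {C : ℝ}
    (hw : AEStronglyMeasurable w ν) (hwC : ∀ᵐ p ∂ν, |w p| ≤ C) :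
    Integrable (fun p => w p * Φ (z p)) ν :=
  (memLp_one_iff_integrable.1 (hΦ.comp_memLp hΦ0 (memLp_one_iff_integrable.2 hz))).bdd_mul hw hwC

lemma hasDerivAt_integral_mul_comp_add_mul {Φ φ : ℝ → ℝ} {K : NNReal} (hΦ : LipschitzWith K Φ)
    (hφ : ∀ ρ, HasDerivAt Φ (φ ρ) ρ) {w u v : Y → ℝ} {C : ℝ} (hw : AEStronglyMeasurable w ν)
    (hwC : ∀ᵐ p ∂ν, |w p| ≤ C) (hu : AEStronglyMeasurable u ν) (hv : Integrable v ν)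
    (hint : Integrable (fun p => w p * Φ (u p)) ν) :
    HasDerivAt (fun t => ∫ p, w p * Φ (u p + t * v p) ∂ν) (∫ p, w p * φ (u p) * v p ∂ν) 0 := by
  have hmeas : ∀ t : ℝ, AEStronglyMeasurable (fun p => w p * Φ (u p + t * v p)) ν := fun t =>
    hw.mul (hΦ.continuous.comp_aestronglyMeasurable (hu.add (hv.1.const_mul t)))
  have hφ_meas : AEStronglyMeasurable (fun p => w p * φ (u p) * v p) ν := by
    have hφ_eq : φ = deriv Φ := funext fun ρ => (hφ ρ).deriv.symm
    rw [hφ_eq]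
    exact (hw.mul ((measurable_deriv Φ).comp_aemeasurable hu.aemeasurable).aestronglyMeasurable).mul
      hv.1
  have hlip : ∀ᵐ p ∂ν, LipschitzOnWith (Real.nnabs (C * K * |v p|))
      (fun t => w p * Φ (u p + t * v p)) Set.univ := by
    filter_upwards [hwC] with p hp
    refine (LipschitzWith.of_dist_le_mul fun s t => ?_).lipschitzOnWith
    have hC : 0 ≤ C := (abs_nonneg _).trans hp
    rw [Real.coe_nnabs, abs_of_nonneg (by positivity), Real.dist_eq, Real.dist_eq, ← mul_sub,
      abs_mul]
    calc |w p| * |Φ (u p + s * v p) - Φ (u p + t * v p)|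
        ≤ C * (K * |(u p + s * v p) - (u p + t * v p)|) := by
          gcongr
          simpa only [Real.dist_eq] using hΦ.dist_le_mul _ _
      _ = C * K * |v p| * |s - t| := by
          rw [show (u p + s * v p) - (u p + t * v p) = v p * (s - t) by ring, abs_mul]
          ring
  have hdiff : ∀ p, HasDerivAt (fun t => w p * Φ (u p + t * v p)) (w p * φ (u p) * v p) 0 := by
    intro p
    have hline : HasDerivAt (fun t : ℝ => u p + t * v p) (v p) 0 := by
      simpa using (hasDerivAt_mul_const (v p)).const_add (u p)
    simpa [mul_assoc] using ((hφ (u p + 0 * v p)).comp 0 hline).const_mul (w p)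
  exact (hasDerivAt_integral_of_dominated_loc_of_lip Filter.univ_mem
    (.of_forall hmeas) (by simpa using hint) hφ_meas hlip (hv.abs.const_mul _)
    (.of_forall hdiff)).2

end

lemma integral_prod_mul_sub_of_antisymm {X : Type*} [MeasurableSpace X] {μ : Measure X}
    [SFinite μ] {k : X → X → ℝ} (hk : ∀ x y, k y x = -k x y) {G : X → ℝ}
    (hint : Integrable (fun p : X × X => k p.1 p.2 * G p.1) (μ.prod μ)) :
    ∫ p, k p.1 p.2 * (G p.1 - G p.2) ∂μ.prod μ = 2 * ∫ x, ∫ y, k x y * G x ∂μ ∂μ := by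
  have hswap : (fun p : X × X => k p.1 p.2 * G p.2) = fun p => -(k p.2 p.1 * G p.2) := by
    funext p
    rw [hk]
    ring
  have hint_swap : Integrable (fun p : X × X => k p.1 p.2 * G p.2) (μ.prod μ) := by
    rw [hswap]
    exact hint.swap.neg
  have hintegral_swap :
      ∫ p, k p.1 p.2 * G p.2 ∂μ.prod μ = -∫ p, k p.1 p.2 * G p.1 ∂μ.prod μ := by
    rw [hswap, integral_neg, ← integral_prod_swap (fun p : X × X => k p.1 p.2 * G p.1)]
    rfl
  simp_rw [mul_sub]
  rw [integral_sub hint hint_swap, hintegral_swap, integral_integral hint]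
  ring

theorem interaction_gateaux_deriv_general {X : Type*} [MeasurableSpace X]
    (μ : Measure X) [IsFiniteMeasure μ] (α : ℝ)
    (ω : X → X → ℝ) (hmeas : Measurable fun p : X × X => ω p.1 p.2)
    (hbdd : ∃ C : ℝ, ∀ x y, |ω x y| ≤ C)
    (hsymm : ∀ x y, ω x y = ω y x)
    (F G : X → ℝ) (hF : MemLp F 2 μ) (hG : MemLp G 2 μ) :
    HasDerivAt
      (fun t : ℝ =>
        ∫ x, ∫ y, ω x y * sigmoidPrimitive α ((F x + t * G x) - (F y + t * G y)) ∂μ ∂μ)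
      (2 * ∫ x, ∫ y, ω x y * sigmoid α (F x - F y) * G x ∂μ ∂μ) 0 := by
  obtain ⟨C, hC⟩ := hbdd
  have hFi := hF.integrable one_le_two
  have hGi := hG.integrable one_le_two
  have hω : AEStronglyMeasurable (fun p : X × X => ω p.1 p.2) (μ.prod μ) :=
    hmeas.aestronglyMeasurable
  have hωC : ∀ᵐ p ∂μ.prod μ, |ω p.1 p.2| ≤ C := .of_forall fun p => hC _ _
  have hu : Integrable (fun p : X × X => F p.1 - F p.2) (μ.prod μ) :=
    (hFi.comp_fst μ).sub (hFi.comp_snd μ)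
  have hv : Integrable (fun p : X × X => G p.1 - G p.2) (μ.prod μ) :=
    (hGi.comp_fst μ).sub (hGi.comp_snd μ)
  have hint (t : ℝ) : Integrable (fun p : X × X =>
      ω p.1 p.2 * sigmoidPrimitive α ((F p.1 - F p.2) + t * (G p.1 - G p.2))) (μ.prod μ) :=
    (hu.add (hv.const_mul t)).bdd_mul_comp_lipschitzWith (lipschitzWith_sigmoidPrimitive α)
      (sigmoidPrimitive_zero α) hω hωC
  have hJ : (fun t : ℝ =>
      ∫ x, ∫ y, ω x y * sigmoidPrimitive α ((F x + t * G x) - (F y + t * G y)) ∂μ ∂μ) =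
      fun t => ∫ p, ω p.1 p.2 *
        sigmoidPrimitive α ((F p.1 - F p.2) + t * (G p.1 - G p.2)) ∂μ.prod μ := by
    funext t
    simp_rw [add_sub_add_comm, ← mul_sub]
    exact integral_integral (hint t)
  have hk (x y : X) : ω y x * sigmoid α (F y - F x) = -(ω x y * sigmoid α (F x - F y)) := by
    rw [hsymm, ← neg_sub, sigmoid_neg, mul_neg]
  have hkG : Integrable (fun p : X × X => ω p.1 p.2 * sigmoid α (F p.1 - F p.2) * G p.1)
      (μ.prod μ) := by
    refine (hGi.comp_fst μ).bdd_mul (c := C)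
      (hω.mul ((sigmoid_continuous α).comp_aestronglyMeasurable hu.1)) ?_
    filter_upwards [hωC] with p hp
    rw [Real.norm_eq_abs, abs_mul]
    simpa using mul_le_mul hp (abs_sigmoid_le_one α _) (abs_nonneg _) ((abs_nonneg _).trans hp)
  rw [hJ, ← integral_prod_mul_sub_of_antisymm hk hkG]
  simpa only [mul_assoc] using hasDerivAt_integral_mul_comp_add_mul
    (lipschitzWith_sigmoidPrimitive α) (hasDerivAt_sigmoidPrimitive α) hω hωC hu.1 hv
    (by simpa using hint 0)

/-- Gateaux derivative of the Wilson–Cowan interaction term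
`J(F) = ∫∫ ω(x,y) Σ_α(F(x) - F(y)) dμ dμ` on a finite measure space, for a bounded
measurable symmetric kernel `ω`: for `F, G ∈ L²`,
`d/dt J(F + tG)|_{t=0} = 2 ∫∫ ω(x,y) σ_α(F(x) - F(y)) G(x) dμ(y) dμ(x)`. -/
theorem interaction_gateaux_deriv {X : Type*} [MeasurableSpace X]
    (μ : Measure X) [IsFiniteMeasure μ] (α : ℝ) (hα : 0 < α)
    (ω : X → X → ℝ) (hmeas : Measurable fun p : X × X => ω p.1 p.2)
    (hbdd : ∃ C : ℝ, ∀ x y, |ω x y| ≤ C)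
    (hsymm : ∀ x y, ω x y = ω y x)
    (F G : X → ℝ) (hF : MemLp F 2 μ) (hG : MemLp G 2 μ) :
    HasDerivAt
      (fun t : ℝ =>
        ∫ x, ∫ y, ω x y * sigmoidPrimitive α ((F x + t * G x) - (F y + t * G y)) ∂μ ∂μ)
      (2 * ∫ x, ∫ y, ω x y * sigmoid α (F x - F y) * G x ∂μ ∂μ) 0 :=
  interaction_gateaux_deriv_general μ α ω hmeas hbdd hsymm F G hF hG
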